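/- arXiv:math/0004025 — 2 statements merged into one kernel-verified Lean document; each statement's English description precedes it below -/
import Mathlib

section
/- Let (z_n) be a sequence of complex numbers such that ∑_n e^{m·Re(z_n)} < ∞ for every positive integer m. Define F(m) = ∑_n e^{m·z_n}. Then F is not identically zero on the positive integers. -/
/-!
With `q n = exp (z n)`, `F m = ∑ q n ^ m` is the `m`-th power sum of a nonzero absolutely
summable sequence. Scale so that `max ‖q n‖ = 1`. The finitely many terms of modulus one return
simultaneously close to `1` for infinitely many exponents `m` (recurrence of a rotation of a compact
torus), so their contribution has real part at least `1 / 2`, while the remaining terms tend to `0`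
by dominated convergence.
-/

open Filter Topology

theorem Filter.Tendsto.exists_forall_ge_of_pos {ι : Type*} {g : ι → ℝ}
    (hg : Tendsto g cofinite (𝓝 0)) {i : ι} (hi : 0 < g i) : ∃ j, ∀ k, g k ≤ g j := by
  have hfin : {k | g i ≤ g k}.Finite := by
    simpa using eventually_cofinite.1 (hg.eventually (gt_mem_nhds hi))
  obtain ⟨j, hij, hmax⟩ := Set.exists_max_image _ g hfin ⟨i, le_refl (g i)⟩
  refine ⟨j, fun k => ?_⟩
  by_cases hk : g i ≤ g k
  · exact hmax k hk
  · exact (not_le.1 hk).le.trans hij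

theorem mapClusterPt_one_pow {G : Type*} [Group G] [TopologicalSpace G] [IsTopologicalGroup G]
    [CompactSpace G] (g : G) : MapClusterPt 1 atTop (g ^ · : ℕ → G) := by
  obtain ⟨a, ha⟩ := exists_clusterPt_of_compactSpace (map (g ^ · : ℕ → G) atTop)
  have hdiv : Tendsto (fun p : G × G => p.1⁻¹ * p.2) (𝓝 a ×ˢ 𝓝 a) (𝓝 1) := by
    have hcont : Continuous fun p : G × G => p.1⁻¹ * p.2 := by fun_prop
    simpa [nhds_prod_eq] using hcont.tendsto (a, a)
  rw [mapClusterPt_iff_frequently]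
  intro U hU
  -- if `g ^ k` and `g ^ l` are both near the cluster point `a`, then `g ^ (l - k)` is near `1`
  obtain ⟨V, hV, W, hW, hVW⟩ := mem_prod_iff.1 (hdiv hU)
  have hfreq := mapClusterPt_iff_frequently.1 ha (V ∩ W) (inter_mem hV hW)
  refine frequently_atTop.2 fun N => ?_
  obtain ⟨k, -, hk⟩ := frequently_atTop.1 hfreq 0
  obtain ⟨l, hkl, hl⟩ := frequently_atTop.1 hfreq (k + N)
  refine ⟨l - k, by omega, ?_⟩
  have hpow : g ^ (l - k) = (g ^ k)⁻¹ * g ^ l := by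
    rw [eq_inv_mul_iff_mul_eq, ← pow_add, Nat.add_sub_cancel' (by omega)]
  rw [hpow]
  exact hVW (show (g ^ k, g ^ l) ∈ V ×ˢ W from ⟨hk.1, hl.2⟩)

theorem frequently_forall_norm_pow_sub_one_lt {ι : Type*} [Finite ι] {u : ι → ℂ}
    (hu : ∀ i, ‖u i‖ = 1) {ε : ℝ} (hε : 0 < ε) :
    ∃ᶠ m in atTop, ∀ i, ‖u i ^ m - 1‖ < ε := by
  let g : ι → Circle := fun i => ⟨u i, mem_sphere_zero_iff_norm.2 (hu i)⟩
  have hnear : ∀ᶠ h : ι → Circle in 𝓝 1, ∀ i, ‖(h i : ℂ) - 1‖ < ε := by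
    refine eventually_all.2 fun i => ?_
    have hcont : Continuous fun h : ι → Circle => (h i : ℂ) := by fun_prop
    simpa [dist_eq_norm] using hcont.tendsto 1 |>.eventually (Metric.ball_mem_nhds _ hε)
  exact (mapClusterPt_one_pow g).frequently hnear

theorem Complex.one_half_le_re_sum {ι : Type*} {s : Finset ι} (hs : s.Nonempty) {w : ι → ℂ}
    (hw : ∀ i ∈ s, ‖w i - 1‖ < 1 / 2) : 1 / 2 ≤ (∑ i ∈ s, w i).re := by
  have hre (i : ι) (hi : i ∈ s) : 1 / 2 ≤ (w i).re := by
    have := (abs_lt.1 ((Complex.abs_re_le_norm (w i - 1)).trans_lt (hw i hi))).1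
    simp only [Complex.sub_re, Complex.one_re] at this
    linarith
  have hcard : (1 : ℝ) ≤ s.card := by exact_mod_cast hs.card_pos
  calc (1 / 2 : ℝ) ≤ ∑ _i ∈ s, (1 / 2 : ℝ) := by
        rw [Finset.sum_const, nsmul_eq_mul]
        linarith
    _ ≤ (∑ i ∈ s, w i).re := by
        rw [Complex.re_sum]
        exact Finset.sum_le_sum hre

theorem frequently_tsum_pow_ne_zero_of_norm_le_one {ι : Type*} {q : ι → ℂ}
    (hq : Summable (‖q ·‖)) (hle : ∀ i, ‖q i‖ ≤ 1) (hone : ∃ i, ‖q i‖ = 1) :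
    ∃ᶠ m in atTop, ∑' i, q i ^ m ≠ 0 := by
  have hfin : {i | 1 ≤ ‖q i‖}.Finite := by
    simpa using eventually_cofinite.1 (hq.tendsto_cofinite_zero.eventually (gt_mem_nhds one_pos))
  set S := hfin.toFinset
  have hS : S.Nonempty := by
    obtain ⟨i, hi⟩ := hone
    exact ⟨i, by simp [S, hi]⟩
  have hpow_le {m : ℕ} (hm : 1 ≤ m) (i : ι) : ‖q i ^ m‖ ≤ ‖q i‖ := by
    rw [norm_pow]
    exact pow_le_of_le_one (norm_nonneg _) (hle i) (by omega)
  have htail : Tendsto (fun m => ∑' i : ((S : Set ι)ᶜ : Set ι), q i ^ m) atTop (𝓝 0) := by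
    have hlt (i : ((S : Set ι)ᶜ : Set ι)) : ‖q i‖ < 1 := by
      simpa [S] using i.2
    simpa using tendsto_tsum_of_dominated_convergence (hq.subtype _)
      (fun i => tendsto_pow_atTop_nhds_zero_of_norm_lt_one (hlt i))
      ((eventually_ge_atTop 1).mono fun m hm i => hpow_le hm i)
  have hphase := frequently_forall_norm_pow_sub_one_lt (u := fun i : S => q i)
    (fun i => le_antisymm (hle i) (hfin.mem_toFinset.1 i.2)) (by norm_num : (0 : ℝ) < 1 / 2)
  refine ((eventually_ge_atTop 1).and
    (htail.eventually (Metric.ball_mem_nhds 0 (by norm_num : (0 : ℝ) < 1 / 2)))).and_frequently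
    hphase |>.mono ?_
  rintro m ⟨⟨hm, hT⟩, hP⟩
  have hsum : Summable (q · ^ m) := hq.of_norm_bounded (hpow_le hm)
  rw [← hsum.sum_add_tsum_compl (s := S)]
  set T := ∑' i : ((S : Set ι)ᶜ : Set ι), q i ^ m
  have hTre : -(1 / 2) < T.re := by
    rw [dist_zero_right] at hT
    linarith [neg_le_of_abs_le (Complex.abs_re_le_norm T)]
  have hPre := Complex.one_half_le_re_sum (w := (q · ^ m)) hS fun i hi => hP ⟨i, hi⟩
  intro h0
  have := congrArg Complex.re h0
  rw [Complex.add_re, Complex.zero_re] at this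
  linarith

theorem frequently_tsum_pow_ne_zero {ι : Type*} {q : ι → ℂ} (hq : Summable (‖q ·‖))
    (h0 : q ≠ 0) : ∃ᶠ m in atTop, ∑' i, q i ^ m ≠ 0 := by
  obtain ⟨i, hi⟩ := Function.ne_iff.1 h0
  obtain ⟨j, hj⟩ := hq.tendsto_cofinite_zero.exists_forall_ge_of_pos (norm_pos_iff.2 hi)
  have hr : ‖q j‖ ≠ 0 := ((norm_pos_iff.2 hi).trans_le (hj i)).ne'
  set c : ℂ := (‖q j‖ : ℂ)⁻¹
  have hnorm (k : ι) : ‖c * q k‖ = ‖q k‖ / ‖q j‖ := by simp [c, div_eq_inv_mul]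
  refine (frequently_tsum_pow_ne_zero_of_norm_le_one (q := (c * q ·)) ?_ ?_ ⟨j, ?_⟩).mono
    fun m hm => ?_
  · simpa only [hnorm] using hq.div_const ‖q j‖
  · intro k
    rw [hnorm]
    exact div_le_one_of_le₀ (hj k) (norm_nonneg _)
  · rw [hnorm, div_self hr]
  · simp_rw [mul_pow, tsum_mul_left] at hm
    exact right_ne_zero_of_mul hm

/-- If `∑ₙ exp (m · Re zₙ) < ∞` for every positive integer `m`, then the
function `F m = ∑ₙ exp (m · zₙ)` is not identically zero on the positive integers. -/
theorem stmt_1 (z : ℕ → ℂ)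
    (h : ∀ m : ℕ, 1 ≤ m → Summable (fun n : ℕ => Real.exp ((m : ℝ) * (z n).re))) :
    ∃ m : ℕ, 1 ≤ m ∧ (∑' n : ℕ, Complex.exp ((m : ℂ) * z n)) ≠ 0 := by
  have hq : Summable fun n => ‖Complex.exp (z n)‖ := by simpa [Complex.norm_exp] using h 1 le_rfl
  have h0 : (fun n => Complex.exp (z n)) ≠ 0 := fun h => Complex.exp_ne_zero (z 0) (congrFun h 0)
  obtain ⟨m, hne, hm⟩ :=
    ((frequently_tsum_pow_ne_zero hq h0).and_eventually (eventually_ge_atTop 1)).exists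
  exact ⟨m, hm, by simpa only [Complex.exp_nat_mul] using hne⟩
end

section
/- Let V be a finite-dimensional real vector space and W ⊆ V a nonempty open convex cone. Then for every compact convex subset Q of the closure W̄ of W with Q ⊆ W, there exists Y ∈ W such that Q ⊆ Y + W̄. -/
open scoped Pointwise

/-- in a finite-dimensional real vector space, every compact convex subset
`Q` of an open convex cone `W` is bounded below in the conal order: there exists
`Y ∈ W` with `Q ⊆ Y + W̄`. -/
theorem stmt_8 {V : Type*} [NormedAddCommGroup V] [NormedSpace ℝ V] [FiniteDimensional ℝ V]
    (W : Set V) (hWopen : IsOpen W) (hWconv : Convex ℝ W)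
    (hWcone : ∀ (c : ℝ), 0 < c → ∀ x ∈ W, c • x ∈ W) (hWne : W.Nonempty)
    (Q : Set V) (hQc : IsCompact Q) (hQconv : Convex ℝ Q) (hQW : Q ⊆ W) :
    ∃ Y ∈ W, Q ⊆ Y +ᵥ closure W := by
  obtain ⟨w, hw⟩ := hWne
  by_cases hQe : Q = ∅
  · exact ⟨w, hw, by simp [hQe]⟩
  -- for each q ∈ Q, find δ > 0 with q - δ • w ∈ W
  have key : ∀ q ∈ Q, ∃ δ : ℝ, 0 < δ ∧ q - δ • w ∈ W := by
    intro q hq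
    obtain ⟨ε, hε, hball⟩ := Metric.isOpen_iff.mp hWopen q (hQW hq)
    refine ⟨ε / (2 * (‖w‖ + 1)), by positivity, hball ?_⟩
    have hw1 : (0:ℝ) < ‖w‖ + 1 := by positivity
    rw [Metric.mem_ball, dist_eq_norm]
    have : ‖q - (ε / (2 * (‖w‖ + 1))) • w - q‖ = (ε / (2 * (‖w‖ + 1))) * ‖w‖ := by
      rw [sub_sub_cancel_left, norm_neg, norm_smul, Real.norm_eq_abs,
        abs_of_pos (by positivity)]
    rw [this]
    calc (ε / (2 * (‖w‖ + 1))) * ‖w‖ ≤ (ε / (2 * (‖w‖ + 1))) * (‖w‖ + 1) := by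
          apply mul_le_mul_of_nonneg_left (by linarith) (by positivity)
      _ = ε / 2 := by field_simp
      _ < ε := by linarith
  choose! δ hδpos hδmem using key
  set U : V → Set V := fun q => {x | x - δ q • w ∈ W} with hU
  have hUopen : ∀ q, IsOpen (U q) := fun q =>
    hWopen.preimage (by continuity : Continuous fun x => x - δ q • w)
  obtain ⟨s, hsQ, hscov⟩ := hQc.elim_nhds_subcover U
    (fun q hq => (hUopen q).mem_nhds (hδmem q hq))
  have hsne : s.Nonempty := by
    rcases Set.nonempty_iff_ne_empty.mpr hQe with ⟨q, hq⟩
    obtain ⟨i, hi, -⟩ := Set.mem_iUnion₂.mp (hscov hq)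
    exact ⟨i, hi⟩
  set d : ℝ := s.inf' hsne δ with hd
  have hdpos : 0 < d := by
    rw [hd, Finset.lt_inf'_iff]
    exact fun i hi => hδpos i (hsQ i hi)
  refine ⟨d • w, hWcone d hdpos w hw, ?_⟩
  intro q hq
  obtain ⟨i, hi, hqi⟩ := Set.mem_iUnion₂.mp (hscov hq)
  have hiQ : i ∈ Q := hsQ i hi
  have h1 : q - δ i • w ∈ W := hqi
  have hδi : 0 < δ i := hδpos i hiQ
  have hdle : d ≤ δ i := Finset.inf'_le δ hi
  set t : ℝ := d / δ i with ht
  have htpos : 0 < t := by positivity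
  have htle : t ≤ 1 := by rw [ht, div_le_one hδi]; exact hdle
  have hmem : q - d • w ∈ W := by
    have := hWconv h1 (hQW hq) htpos.le (by linarith : (0:ℝ) ≤ 1 - t) (by ring)
    have heq : t • (q - δ i • w) + (1 - t) • q = q - d • w := by
      have : t * δ i = d := by rw [ht]; field_simp
      rw [smul_sub, ← this, sub_smul, one_smul, smul_smul]
      abel
    rwa [heq] at this
  exact ⟨q - d • w, subset_closure hmem, show d • w + (q - d • w) = q by abel⟩
end
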